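/- arXiv:2209.01672 — 2 statements merged into one kernel-verified Lean document; each statement's English description precedes it below -/
import Mathlib

section
/- Suppose (V_i)_{i ∈ ℤ} is a sequence of non-negative integers satisfying V_{i+1} ≤ V_i ≤ V_{i+1} + 1 for all i, and suppose p > q > 1 are coprime integers with, for every 0 ≤ ℓ ≤ (p-1)(q-1)/2, the relation ∑_{i=0}^{q-1} (V_{ℓ+i} - V_{α(ℓ+i+p)}) = (p-1)(q-1)/2 - ℓ, where α(j) = min(j, pq - j). Then V_i ≠ 0 for all i with 0 ≤ i < (p-1)(q-1)/2. -/
/-- Suppose `(V i)` is a sequence of non-negative integers with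
`V (i+1) ≤ V i ≤ V (i+1) + 1` for all `i`, and `p > q > 1` are coprime integers
such that for every `0 ≤ ℓ ≤ N := (p-1)(q-1)/2` we have
`∑_{i=0}^{q-1} (V (ℓ+i) - V (α (ℓ+i+p))) = N - ℓ`, where `α j = min j (pq - j)`.
Then `V i ≠ 0` for all `0 ≤ i < N`. -/
theorem stmt_4 (p q N : ℤ) (hq : 1 < q) (hpq : q < p) (hcop : IsCoprime p q)
    (hN : 2 * N = (p - 1) * (q - 1)) (V : ℤ → ℤ)
    (hnn : ∀ i, 0 ≤ V i)
    (hstep : ∀ i, V (i + 1) ≤ V i ∧ V i ≤ V (i + 1) + 1)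
    (hsum : ∀ ℓ : ℤ, 0 ≤ ℓ → ℓ ≤ N →
      ∑ i ∈ Finset.range q.toNat,
        (V (ℓ + (i : ℤ)) - V (min (ℓ + (i : ℤ) + p) (p * q - (ℓ + (i : ℤ) + p))))
        = N - ℓ) :
    ∀ i : ℤ, 0 ≤ i → i < N → V i ≠ 0 := by
  have mono : ∀ (i : ℤ) (n : ℕ), V (i + n) ≤ V i := by
    intro i n
    induction n with
    | zero => simp
    | succ n ih =>
        calc V (i + (n + 1 : ℕ)) = V (i + n + 1) := by push_cast; ring_nf
          _ ≤ V (i + n) := (hstep (i + n)).1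
          _ ≤ V i := ih
  intro i hi hiN hV0
  have h := hsum i hi hiN.le
  have h1 : (N - i : ℤ) ≤ ∑ j ∈ Finset.range q.toNat, V (i + (j : ℤ)) := by
    rw [← h]
    exact Finset.sum_le_sum fun j _ => sub_le_self _ (hnn _)
  have h2 : ∑ j ∈ Finset.range q.toNat, V (i + (j : ℤ)) ≤ 0 := by
    have : ∀ j ∈ Finset.range q.toNat, V (i + (j : ℤ)) ≤ 0 := by
      intro j _
      calc V (i + (j : ℤ)) ≤ V i := mono i j
        _ = 0 := hV0
    calc ∑ j ∈ Finset.range q.toNat, V (i + (j : ℤ))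
        ≤ ∑ _j ∈ Finset.range q.toNat, (0 : ℤ) := Finset.sum_le_sum this
      _ = 0 := by simp
  linarith
end

section
/- Let p > q > 1 be coprime integers, and suppose the sequence (V_i)_{i≥0} of non-negative non-increasing integers with steps in {0,1} satisfies ∑_{i=0}^{q-1}(V_{ℓ+i} - V_{ℓ+i+p}) = (p-1)(q-1)/2 - ℓ for all 0 ≤ ℓ ≤ (p-1)(q-1)/2 (with all relevant indices below g - p so that α(j) = j there). If j < j + q + 1 < g - p and V_j = V_{j+q+1}, then V_{j+q+1+p} > V_{j+p}, a contradiction with monotonicity; hence any run of consecutive equal V_i's with all indices below g - p has length at most q. -/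
/-- Let `p > q > 1` be coprime integers, `2g = pq + 1`, `2N = (p-1)(q-1)`, and
suppose the non-negative, non-increasing sequence `(V i)` with steps in
`{0,1}` satisfies `∑_{i=0}^{q-1} (V (ℓ+i) - V (ℓ+i+p)) = N - ℓ` for all
`0 ≤ ℓ ≤ N`.  Then there is no run of `q+1` consecutive equal values with all
indices below `g - p`: if `0 ≤ j` and `j + q + 1 < g - p`, then
`V j ≠ V (j + q + 1)`. -/
theorem stmt_13 (p q g N : ℤ) (hq : 1 < q) (hpq : q < p)
    (hcop : IsCoprime p q) (hg : 2 * g = p * q + 1)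
    (hN : 2 * N = (p - 1) * (q - 1)) (V : ℤ → ℤ)
    (hnn : ∀ i, 0 ≤ V i)
    (hmono : ∀ i j : ℤ, i ≤ j → V j ≤ V i)
    (hstep : ∀ i, V i - V (i + 1) = 0 ∨ V i - V (i + 1) = 1)
    (hsum : ∀ ℓ : ℤ, 0 ≤ ℓ → ℓ ≤ N →
      ∑ i ∈ Finset.range q.toNat, (V (ℓ + (i : ℤ)) - V (ℓ + (i : ℤ) + p)) = N - ℓ) :
    ∀ j : ℤ, 0 ≤ j → j + q + 1 < g - p → V j ≠ V (j + q + 1) := by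
  intro j hj hlt heq
  have hq0 : (0:ℤ) < q := by linarith
  have hqn : (q.toNat : ℤ) = q := Int.toNat_of_nonneg hq0.le
  -- N is at least g - p
  have hNge : g - p ≤ N := by linarith
  have h1 := hsum j hj (by linarith)
  have h2 := hsum (j + 1) (by linarith) (by linarith)
  set f : ℕ → ℤ := fun i => V (j + (i : ℤ)) - V (j + (i : ℤ) + p) with hf
  have h2' : ∑ i ∈ Finset.range q.toNat, f (i + 1) = N - (j + 1) := by
    rw [← h2]
    apply Finset.sum_congr rfl
    intro i _
    simp only [hf]
    push_cast
    ring_nf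
  have hsucc' := Finset.sum_range_succ' f q.toNat
  have hsucc := Finset.sum_range_succ f q.toNat
  have h1' : ∑ i ∈ Finset.range q.toNat, f i = N - j := h1
  have key : f q.toNat - f 0 = -1 := by
    have := hsucc'.symm.trans hsucc
    rw [h2', h1'] at this
    linarith
  have hfq : f q.toNat = V (j + q) - V (j + q + p) := by
    simp only [hf, hqn]
  have hf0 : f 0 = V j - V (j + p) := by
    simp only [hf]
    norm_num
  -- V (j + q) = V j
  have hm1 := hmono j (j + q) (by linarith)
  have hm2 := hmono (j + q) (j + q + 1) (by linarith)
  have hm3 := hmono (j + p) (j + q + p) (by linarith)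
  rw [hfq, hf0] at key
  linarith
end
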